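/- Let g be a complex reductive Lie algebra with non-degenerate invariant form, and x ∈ g. The set z(g^x)^{reg} := {y ∈ z(g^x) : g^y = g^x} coincides with {y ∈ z(g^x) : rank(ad_g(y)) = rank(ad_g(x))} and with {y ∈ z(g^x) : z(g^y) = z(g^x)}; it is a Zariski open subset of z(g^x) containing x, hence irreducible. -/

import Mathlib

def IsReductiveLie (R L : Type*) [CommRing R] [LieRing L] [LieAlgebra R L] : Prop :=
  LieAlgebra.radical R L = LieAlgebra.center R L

/-- The centralizer `g^x` of `x`, as a subset. -/
def cent {L : Type*} [LieRing L] (x : L) : Set L := {z : L | ⁅z, x⁆ = 0}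

/-- The center `z(g^x)` of the centralizer of `x`, as a subset. -/
def zcent {L : Type*} [LieRing L] (x : L) : Set L :=
  {y : L | ⁅y, x⁆ = 0 ∧ ∀ z : L, ⁅z, x⁆ = 0 → ⁅y, z⁆ = 0}

/-- The Zariski topology on a complex vector space: generated by the complements of zero
sets of polynomial functions. -/
def zariskiTopology (L : Type*) [AddCommGroup L] [Module ℂ L] : TopologicalSpace L :=
  TopologicalSpace.generateFrom
    {U : Set L | ∃ p ∈ Algebra.adjoin ℂ (Set.range fun f : Module.Dual ℂ L => ⇑f),
      U = {x : L | p x ≠ 0}}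


/-!
Every `y ∈ z(g^x)` commutes with `g^x`, so `g^x ⊆ g^y`; hence `g^y = g^x` exactly when
`dim g^y ≤ dim g^x`, i.e. when `rank ad y ≥ rank ad x`, and `z(g^y)` is determined by `g^y`.
The rank condition says that some minor of `ad y` does not vanish; minors are polynomial in `y`,
so this is a Zariski-open condition on the linear space `z(g^x)`. A nonempty open subset of a
linear space is irreducible: the line through two of its points meets every nonempty Zariski-open
set in all but finitely many parameters.
-/

open Module LinearMap

section LinearAlgebra

variable {K V W W' : Type*} [Field K] [AddCommGroup V] [Module K V] [AddCommGroup W] [Module K W]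
  [AddCommGroup W'] [Module K W']

theorem finrank_range_le_of_ker_le [FiniteDimensional K V] {f : V →ₗ[K] W} {g : V →ₗ[K] W'}
    (h : ker f ≤ ker g) : finrank K (range g) ≤ finrank K (range f) := by
  have := Submodule.finrank_mono h
  have := finrank_range_add_finrank_ker f
  have := finrank_range_add_finrank_ker g
  omega

theorem ker_eq_iff_finrank_range_eq_of_ker_le [FiniteDimensional K V] {f : V →ₗ[K] W}
    {g : V →ₗ[K] W'} (h : ker f ≤ ker g) :
    ker g = ker f ↔ finrank K (range g) = finrank K (range f) := by
  have := finrank_range_add_finrank_ker f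
  have := finrank_range_add_finrank_ker g
  refine ⟨fun hgf => ?_, fun hr => (Submodule.eq_of_le_of_finrank_le h (by omega)).symm⟩
  have : finrank K (ker g) = finrank K (ker f) := by rw [hgf]
  omega

theorem le_finrank_range_iff_exists_det_ne_zero [FiniteDimensional K W] (f : V →ₗ[K] W) (r : ℕ) :
    r ≤ finrank K (range f) ↔
      ∃ (v : Fin r → V) (φ : Fin r → Dual K W), (Matrix.of fun i j => φ i (f (v j))).det ≠ 0 := by
  classical
  constructor
  · intro hr
    obtain ⟨u, hu⟩ := exists_linearIndependent_of_le_finrank hr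
    choose v hv using fun j => mem_range.mp (u j).2
    have hinj := (hu.map' _ (range f).ker_subtype).fintypeLinearCombination_injective
    -- a family dual to `u`: lift the coordinate functionals of `Fin r → K` along the
    -- injective map `c ↦ ∑ j, c j • u j`
    choose φ hφ using fun i => dualMap_surjective_of_injective hinj (proj i)
    refine ⟨v, φ, ?_⟩
    suffices (Matrix.of fun i j => φ i (f (v j))) = 1 by simp [this]
    ext i j
    have := congr($(hφ i) (Pi.single j 1))
    simp only [dualMap_apply, Fintype.linearCombination_apply_single, one_smul,
      Function.comp_apply, proj_apply, Submodule.subtype_apply, Pi.single_apply] at this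
    rw [Matrix.of_apply, hv, this, Matrix.one_apply]
  · rintro ⟨v, φ, hdet⟩
    have hli : LinearIndependent K (f ∘ v) :=
      .of_comp (LinearMap.pi φ) (Matrix.linearIndependent_cols_of_det_ne_zero hdet)
    calc r = finrank K (Submodule.span K (Set.range (f ∘ v))) := by
          rw [finrank_span_eq_card hli, Fintype.card_fin]
      _ ≤ finrank K (range f) := Submodule.finrank_mono <| Submodule.span_le.mpr <| by
          rintro _ ⟨j, rfl⟩
          exact mem_range_self f (v j)

end LinearAlgebra

section Zariski

variable {L : Type*} [AddCommGroup L] [Module ℂ L]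

abbrev polynomialFun (L : Type*) [AddCommGroup L] [Module ℂ L] : Subalgebra ℂ (L → ℂ) :=
  Algebra.adjoin ℂ (Set.range fun f : Dual ℂ L => ⇑f)

theorem det_mem_polynomialFun {n : Type*} [Fintype n] [DecidableEq n]
    (ψ : Matrix n n (Dual ℂ L)) : (fun y => (ψ.map (· y)).det) ∈ polynomialFun L := by
  let M : Matrix n n (polynomialFun L) := ψ.map fun f => ⟨f, Algebra.subset_adjoin ⟨f, rfl⟩⟩
  have : (fun y => (ψ.map (· y)).det) = (polynomialFun L).val M.det := by
    funext y
    rw [(polynomialFun L).val.map_det]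
    exact ((Pi.evalRingHom (fun _ : L => ℂ) y).map_det _).symm
  exact this ▸ M.det.2

theorem exists_polynomial_eval_line {p : L → ℂ} (hp : p ∈ polynomialFun L) (a b : L) :
    ∃ q : Polynomial ℂ, ∀ t : ℂ, p (a + t • b) = q.eval t := by
  induction hp using Algebra.adjoin_induction with
  | mem f hf =>
    obtain ⟨g, rfl⟩ := hf
    exact ⟨.C (g a) + .X * .C (g b), fun t => by
      simp only [map_add, map_smul, smul_eq_mul, Polynomial.eval_add, Polynomial.eval_C,
        Polynomial.eval_mul, Polynomial.eval_X]⟩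
  | algebraMap c => exact ⟨.C c, fun t => by rw [Polynomial.eval_C]; rfl⟩
  | add p₁ p₂ _ _ ih₁ ih₂ =>
    obtain ⟨q₁, hq₁⟩ := ih₁
    obtain ⟨q₂, hq₂⟩ := ih₂
    exact ⟨q₁ + q₂, fun t => by simp [hq₁, hq₂]⟩
  | mul p₁ p₂ _ _ ih₁ ih₂ =>
    obtain ⟨q₁, hq₁⟩ := ih₁
    obtain ⟨q₂, hq₂⟩ := ih₂
    exact ⟨q₁ * q₂, fun t => by simp [hq₁, hq₂]⟩

theorem continuous_line_cofinite_zariski (a b : L) :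
    @Continuous ℂ L .cofinite (zariskiTopology L) (fun t : ℂ => a + t • b) := by
  refine continuous_generateFrom_iff.mpr ?_
  rintro _ ⟨p, hp, rfl⟩
  obtain ⟨q, hq⟩ := exists_polynomial_eval_line hp a b
  rintro ⟨t, ht⟩
  have hq0 : q ≠ 0 := by rintro rfl; simp_all
  exact (Polynomial.finite_setOfPred_isRoot hq0).subset fun s hs => by simpa [hq] using hs

theorem isOpen_setOf_le_finrank_range {V W : Type*} [AddCommGroup V] [Module ℂ V]
    [AddCommGroup W] [Module ℂ W] [FiniteDimensional ℂ W] (A : L →ₗ[ℂ] V →ₗ[ℂ] W) (r : ℕ) :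
    @IsOpen L (zariskiTopology L) {y : L | r ≤ finrank ℂ (range (A y))} := by
  let := zariskiTopology L
  simp_rw [le_finrank_range_iff_exists_det_ne_zero, Set.ofPred_exists]
  refine isOpen_iUnion fun v => isOpen_iUnion fun φ => TopologicalSpace.isOpen_generateFrom_of_mem
    ⟨_, det_mem_polynomialFun (Matrix.of fun i j => φ i ∘ₗ A.flip (v j)), rfl⟩

theorem isIrreducible_submodule_inter_isOpen (W : Submodule ℂ L) {U : Set L}
    (hU : @IsOpen L (zariskiTopology L) U) (hne : ((W : Set L) ∩ U).Nonempty) :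
    @IsIrreducible L (zariskiTopology L) ((W : Set L) ∩ U) := by
  let := zariskiTopology L
  refine ⟨hne, ?_⟩
  rintro u v hu hv ⟨a, ⟨haW, haU⟩, hau⟩ ⟨b, ⟨hbW, -⟩, hbv⟩
  have hline := continuous_line_cofinite_zariski a (b - a)
  have h₁ : {t : ℂ | a + t • (b - a) ∈ U ∩ u}ᶜ.Finite :=
    @Continuous.isOpen_preimage ℂ L .cofinite _ _ hline _ (hU.inter hu)
      ⟨0, by simpa using ⟨haU, hau⟩⟩
  have h₂ : {t : ℂ | a + t • (b - a) ∈ v}ᶜ.Finite :=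
    @Continuous.isOpen_preimage ℂ L .cofinite _ _ hline _ hv ⟨1, by simpa using hbv⟩
  obtain ⟨t, ht⟩ := (h₁.union h₂).infinite_compl.nonempty
  simp only [Set.compl_union, compl_compl, Set.mem_inter_iff, Set.mem_ofPred_eq] at ht
  exact ⟨_, ⟨W.add_mem haW (W.smul_mem t (W.sub_mem hbW haW)), ht.1.1⟩, ht.1.2, ht.2⟩

end Zariski

section Centralizers

variable {L : Type*} [LieRing L]

theorem lie_eq_zero_comm {a b : L} : ⁅a, b⁆ = 0 ↔ ⁅b, a⁆ = 0 := by
  rw [← lie_skew, neg_eq_zero]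

theorem mem_zcent_self (x : L) : x ∈ zcent x :=
  ⟨lie_self x, fun _ hz => lie_eq_zero_comm.mp hz⟩

theorem cent_subset_cent_of_mem_zcent {x y : L} (hy : y ∈ zcent x) : cent x ⊆ cent y :=
  fun z hz => lie_eq_zero_comm.mp (hy.2 z hz)

theorem zcent_eq_iff_cent_eq {x y : L} (hy : y ∈ zcent x) :
    zcent y = zcent x ↔ cent y = cent x := by
  constructor
  · intro h
    have hx : x ∈ zcent y := h ▸ mem_zcent_self x
    exact Set.Subset.antisymm (fun z hz => lie_eq_zero_comm.mp (hx.2 z hz))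
      (cent_subset_cent_of_mem_zcent hy)
  · intro h
    show {u | u ∈ cent y ∧ ∀ z ∈ cent y, ⁅u, z⁆ = 0} = {u | u ∈ cent x ∧ ∀ z ∈ cent x, ⁅u, z⁆ = 0}
    rw [h]

section Linear

variable {R : Type*} [CommRing R] [LieAlgebra R L]

variable (R) in
def zcentSubmodule (x : L) : Submodule R L where
  carrier := zcent x
  add_mem' := by
    rintro a b ⟨ha, ha'⟩ ⟨hb, hb'⟩
    exact ⟨by rw [add_lie, ha, hb, add_zero],
      fun z hz => by rw [add_lie, ha' z hz, hb' z hz, add_zero]⟩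
  zero_mem' := ⟨zero_lie x, fun z _ => zero_lie z⟩
  smul_mem' := by
    rintro c a ⟨ha, ha'⟩
    exact ⟨by rw [smul_lie, ha, smul_zero], fun z hz => by rw [smul_lie, ha' z hz, smul_zero]⟩

variable (R) in
theorem cent_eq_ker_ad (y : L) : cent y = ker (LieAlgebra.ad R L y) :=
  Set.ext fun _ => lie_eq_zero_comm

theorem ker_ad_le_ker_ad_of_mem_zcent {x y : L} (hy : y ∈ zcent x) :
    ker (LieAlgebra.ad R L x) ≤ ker (LieAlgebra.ad R L y) := by
  rw [← SetLike.coe_subset_coe, ← cent_eq_ker_ad, ← cent_eq_ker_ad]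
  exact cent_subset_cent_of_mem_zcent hy

end Linear

variable {K : Type*} [Field K] [LieAlgebra K L] [FiniteDimensional K L]

theorem finrank_range_ad_le_of_mem_zcent {x y : L} (hy : y ∈ zcent x) :
    finrank K (range (LieAlgebra.ad K L y)) ≤ finrank K (range (LieAlgebra.ad K L x)) :=
  finrank_range_le_of_ker_le (ker_ad_le_ker_ad_of_mem_zcent hy)

theorem cent_eq_iff_finrank_range_ad_eq {x y : L} (hy : y ∈ zcent x) :
    cent y = cent x ↔
      finrank K (range (LieAlgebra.ad K L y)) = finrank K (range (LieAlgebra.ad K L x)) := by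
  rw [cent_eq_ker_ad K, cent_eq_ker_ad K, SetLike.coe_set_eq]
  exact ker_eq_iff_finrank_range_eq_of_ker_le (ker_ad_le_ker_ad_of_mem_zcent hy)

end Centralizers

theorem zcent_reg_characterizations_general
    {L : Type*} [LieRing L] [LieAlgebra ℂ L] [Module.Finite ℂ L]
    (x : L) :
    ({y ∈ zcent x | cent y = cent x} =
      {y ∈ zcent x |
        Module.finrank ℂ (LinearMap.range (LieAlgebra.ad ℂ L y)) =
        Module.finrank ℂ (LinearMap.range (LieAlgebra.ad ℂ L x))}) ∧
    ({y ∈ zcent x | cent y = cent x} = {y ∈ zcent x | zcent y = zcent x}) ∧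
    x ∈ {y ∈ zcent x | cent y = cent x} ∧
    (∃ U : Set L, @IsOpen L (zariskiTopology L) U ∧
      {y ∈ zcent x | cent y = cent x} = zcent x ∩ U) ∧
    @IsIrreducible L (zariskiTopology L) {y ∈ zcent x | cent y = cent x} := by
  set U := {y | finrank ℂ (range (LieAlgebra.ad ℂ L x)) ≤ finrank ℂ (range (LieAlgebra.ad ℂ L y))}
  have hU : @IsOpen L (zariskiTopology L) U :=
    isOpen_setOf_le_finrank_range (LieAlgebra.ad ℂ L : L →ₗ[ℂ] Module.End ℂ L) _
  have hrank := Set.sep_ext_iff.mpr fun y (hy : y ∈ zcent x) =>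
    cent_eq_iff_finrank_range_ad_eq (K := ℂ) hy
  have hopen : {y ∈ zcent x | cent y = cent x} = zcent x ∩ U := by
    rw [hrank]
    exact Set.ext fun y => and_congr_right fun hy =>
      ⟨ge_of_eq, (finrank_range_ad_le_of_mem_zcent hy).antisymm⟩
  refine ⟨hrank, Set.sep_ext_iff.mpr fun y hy => (zcent_eq_iff_cent_eq hy).symm,
    ⟨mem_zcent_self x, rfl⟩, ⟨U, hU, hopen⟩, ?_⟩
  rw [hopen]
  exact isIrreducible_submodule_inter_isOpen (zcentSubmodule ℂ x) hU
    ⟨x, mem_zcent_self x, by simp [U]⟩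

/-- the set `z(g^x)^{reg} = {y ∈ z(g^x) : g^y = g^x}` coincides with the rank
condition locus and with `{y ∈ z(g^x) : z(g^y) = z(g^x)}`; it is Zariski open in `z(g^x)`,
contains `x`, and is irreducible. -/
theorem zcent_reg_characterizations
    {L : Type*} [LieRing L] [LieAlgebra ℂ L] [Module.Finite ℂ L]
    (hred : IsReductiveLie ℂ L)
    (κ : L →ₗ[ℂ] L →ₗ[ℂ] ℂ)
    (hnondeg : ∀ x : L, (∀ y : L, κ x y = 0) → x = 0)
    (hsymm : ∀ a b : L, κ a b = κ b a)
    (hinv : ∀ a b c : L, κ ⁅a, b⁆ c = κ a ⁅b, c⁆)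
    (x : L) :
    ({y ∈ zcent x | cent y = cent x} =
      {y ∈ zcent x |
        Module.finrank ℂ (LinearMap.range (LieAlgebra.ad ℂ L y)) =
        Module.finrank ℂ (LinearMap.range (LieAlgebra.ad ℂ L x))}) ∧
    ({y ∈ zcent x | cent y = cent x} = {y ∈ zcent x | zcent y = zcent x}) ∧
    x ∈ {y ∈ zcent x | cent y = cent x} ∧
    (∃ U : Set L, @IsOpen L (zariskiTopology L) U ∧
      {y ∈ zcent x | cent y = cent x} = zcent x ∩ U) ∧
    @IsIrreducible L (zariskiTopology L) {y ∈ zcent x | cent y = cent x} :=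
  zcent_reg_characterizations_general x
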